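/- Let F be a family of subsets of Fin n that is downward closed (T ⊆ S and S ∈ F imply T ∈ F) and contains the empty set. Consider, in the extended nonnegative reals, the two suprema: CorGap(F) := ⨆ over x ∈ P(F) and y : Fin n → ℝ≥0 of (Σ_i x_i·y_i) / E[ max over S ∈ F with S ⊆ R(x) of Σ_{i∈S} y_i ], and G(F) := ⨆ over all tuples of independent nonnegative integrable random variables X_1,…,X_n (on any probability space, possibly carrying additional independent randomization) and all ex ante feasible selection rules S for F of E[ Σ_{i∈S} X_i ] / E[ max_{T∈F} Σ_{i∈T} X_i ] (with the convention a/0 = ∞ for a > 0 and 0/0 = 0). Then CorGap(F) = G(F). (This is the paper's Lemma stating that the worst-case ratio between the ex ante and ex post optima of Bayesian combinatorial selection over F equals the correlation gap of F.) -/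

import Mathlib

/-- The convex hull of the indicator vectors of the members of `F`. -/
def exAntePolytope (n : ℕ) (F : Finset (Finset (Fin n))) : Set (Fin n → ℝ) :=
  convexHull ℝ {v : Fin n → ℝ | ∃ S ∈ F, v = fun i => if i ∈ S then (1 : ℝ) else 0}

/-- A Bayesian combinatorial selection instance over `Fin n`: a probability space
(possibly carrying additional independent randomization), independent nonnegative
integrable values `X i`, and a measurable selection rule `S`. -/
structure BCSInstance (n : ℕ) where
  Ω : Type
  [mΩ : MeasurableSpace Ω]
  μ : MeasureTheory.Measure Ω
  prob : MeasureTheory.IsProbabilityMeasure μ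
  X : Fin n → Ω → ℝ
  Xmeas : ∀ i, Measurable (X i)
  Xnonneg : ∀ i ω, 0 ≤ X i ω
  Xint : ∀ i, MeasureTheory.Integrable (X i) μ
  Xindep : ProbabilityTheory.iIndepFun X μ
  S : Ω → Finset (Fin n)
  Smeas : ∀ i, MeasurableSet {ω | i ∈ S ω}

open Finset MeasureTheory ProbabilityTheory

/-!
Ex ante ≤ ex post times the correlation gap: replacing the event `i ∈ S` by an independent coin of
bias `h i (X i) = P(i ∈ S | X i)` keeps the marginals `q` and the expected selected value
`∑ i, q i * y i`, where `q i * y i = E[X i; i ∈ S]`. Given the values, the set of heads is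
distributed as `R(q)`, and on the event that it equals `A` each `X i` with `i ∈ A` has mean `y i`;
so choosing a best `y`-weighted member of `F` inside the heads is an ex post feasible choice worth
`E[max_{T ∈ F, T ⊆ R(q)} y(T)]`. Conversely, `X i = y i · 1[i ∈ R(x)]` with `S = R(x)` attains
every correlation gap ratio, because for a downward closed `F` the ex post optimum of this instance
is `max_{T ∈ F, T ⊆ R(x)} y(T)`.
-/

section Multilinear

variable {ι : Type*} [Fintype ι] [DecidableEq ι]

/-- `P(R(x) = A)`. -/
def bernoulliWeight (x : ι → ℝ) (A : Finset ι) : ℝ :=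
  (∏ i ∈ A, x i) * ∏ i ∈ Aᶜ, (1 - x i)

def multilinearExt (f : Finset ι → ℝ) (x : ι → ℝ) : ℝ :=
  ∑ A ∈ univ.powerset, bernoulliWeight x A * f A

lemma bernoulliWeight_eq_prod_ite (x : ι → ℝ) (A : Finset ι) :
    bernoulliWeight x A = ∏ i, if i ∈ A then x i else 1 - x i := by
  rw [bernoulliWeight, prod_ite, filter_mem_eq_inter, univ_inter, filter_not, filter_mem_eq_inter,
    univ_inter, compl_eq_univ_sdiff]

lemma sum_bernoulliWeight (x : ι → ℝ) : ∑ A ∈ univ.powerset, bernoulliWeight x A = 1 := by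
  simpa [bernoulliWeight] using (Fintype.prod_add x (fun i => 1 - x i)).symm

lemma bernoulliWeight_nonneg {x : ι → ℝ} (hx : ∀ i, x i ∈ Set.Icc 0 1) (A : Finset ι) :
    0 ≤ bernoulliWeight x A :=
  mul_nonneg (prod_nonneg fun i _ => (hx i).1) (prod_nonneg fun i _ => sub_nonneg.2 (hx i).2)

lemma bernoulliWeight_le_one {x : ι → ℝ} (hx : ∀ i, x i ∈ Set.Icc 0 1) (A : Finset ι) :
    bernoulliWeight x A ≤ 1 :=
  sum_bernoulliWeight x ▸ single_le_sum (fun B _ => bernoulliWeight_nonneg hx B)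
    (mem_powerset.2 (subset_univ A))

lemma multilinearExt_le {f : Finset ι → ℝ} {x : ι → ℝ} (hx : ∀ i, x i ∈ Set.Icc 0 1) {M : ℝ}
    (hf : ∀ A, f A ≤ M) : multilinearExt f x ≤ M :=
  calc multilinearExt f x ≤ ∑ A ∈ univ.powerset, bernoulliWeight x A * M :=
        sum_le_sum fun A _ => mul_le_mul_of_nonneg_left (hf A) (bernoulliWeight_nonneg hx A)
    _ = M := by rw [← sum_mul, sum_bernoulliWeight, one_mul]

end Multilinear

section WeightedRank

variable {ι : Type*} [DecidableEq ι]

def weightedRank (F : Finset (Finset ι)) (hemp : ∅ ∈ F) (y : ι → ℝ) (A : Finset ι) : ℝ :=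
  (F.filter (· ⊆ A)).sup' ⟨∅, mem_filter.mpr ⟨hemp, empty_subset A⟩⟩ fun S => ∑ i ∈ S, y i

lemma sup'_sum_ite_mem_eq_weightedRank {F : Finset (Finset ι)}
    (hdc : ∀ S ∈ F, ∀ T ⊆ S, T ∈ F) (hemp : ∅ ∈ F) (y : ι → ℝ) (A : Finset ι) :
    F.sup' ⟨∅, hemp⟩ (fun T => ∑ i ∈ T, if i ∈ A then y i else 0) =
      weightedRank F hemp y A := by
  unfold weightedRank
  refine le_antisymm (sup'_le _ _ fun T hT => ?_) (sup'_le _ _ fun T hT => ?_)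
  · rw [sum_ite_mem]
    have hmem : T ∩ A ∈ F.filter (· ⊆ A) :=
      mem_filter.2 ⟨hdc T hT _ inter_subset_left, inter_subset_right⟩
    exact le_sup' (fun S => ∑ i ∈ S, y i) hmem
  · obtain ⟨hTF, hTA⟩ := mem_filter.1 hT
    calc ∑ i ∈ T, y i = ∑ i ∈ T, if i ∈ A then y i else 0 :=
          sum_congr rfl fun i hi => (if_pos (hTA hi)).symm
      _ ≤ _ := le_sup' (fun S => ∑ i ∈ S, if i ∈ A then y i else 0) hTF

end WeightedRank

lemma integrable_finsetSup' {α κ : Type*} {mα : MeasurableSpace α} {μ : Measure α}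
    {s : Finset κ} (hs : s.Nonempty) {f : κ → α → ℝ} (hf : ∀ k ∈ s, Integrable (f k) μ) :
    Integrable (fun a => s.sup' hs fun k => f k a) μ := by
  rw [show (fun a => s.sup' hs fun k => f k a) = s.sup' hs f from
    funext fun a => (s.sup'_apply hs f a).symm]
  exact sup'_induction hs f (p := fun g => Integrable g μ) (fun _ h₁ _ h₂ => h₁.sup h₂) hf

lemma integrable_comp_of_mem_Icc {Ω : Type*} {mΩ : MeasurableSpace Ω} {μ : Measure Ω}
    [IsFiniteMeasure μ] {Y : Ω → ℝ} (hY : Measurable Y) {g : ℝ → ℝ} (hg : Measurable g)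
    (hg01 : ∀ t, g t ∈ Set.Icc 0 1) : Integrable (fun ω => g (Y ω)) μ :=
  .of_bound (hg.comp hY).aestronglyMeasurable 1 (.of_forall fun ω => by
    obtain ⟨h0, h1⟩ := hg01 (Y ω)
    rw [Real.norm_eq_abs, abs_le]; constructor <;> linarith)

lemma mem_Icc_of_mem_exAntePolytope {n : ℕ} {F : Finset (Finset (Fin n))} {x : Fin n → ℝ}
    (hx : x ∈ exAntePolytope n F) (i : Fin n) : x i ∈ Set.Icc 0 1 := by
  refine convexHull_min ?_ (convex_Icc 0 1 |>.linear_preimage (LinearMap.proj i)) hx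
  rintro _ ⟨S, _, rfl⟩
  by_cases hi : i ∈ S <;> simp [hi]

section BernoulliProduct

variable {ι : Type*} [Fintype ι] (p : ι → unitInterval)

/-- The law of the indicator vector of `R(p)`. -/
noncomputable def bernoulliProduct : Measure (ι → Bool) :=
  Measure.pi fun i => Ber(true, false, p i)

instance : IsProbabilityMeasure (bernoulliProduct p) := by
  unfold bernoulliProduct; infer_instance

lemma bernoulliProduct_real_singleton [DecidableEq ι] (ω : ι → Bool) :
    (bernoulliProduct p).real {ω} =
      bernoulliWeight (fun i => p i) (univ.filter fun i => ω i) := by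
  rw [measureReal_def, bernoulliProduct, ← Set.univ_pi_singleton ω, Measure.pi_pi,
    ENNReal.toReal_prod, bernoulliWeight_eq_prod_ite]
  refine prod_congr rfl fun i _ => ?_
  cases hω : ω i <;> simp [hω]

lemma bernoulliProduct_real_coord_eq_true (i : ι) :
    (bernoulliProduct p).real {ω | ω i = true} = p i :=
  ((measurePreserving_eval (fun i => Ber(true, false, p i)) i).measureReal_preimage
    (s := {true}) (measurableSet_singleton _).nullMeasurableSet).trans (by simp)

lemma integral_bernoulliProduct_comp [DecidableEq ι] (f : Finset ι → ℝ) :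
    ∫ ω, f (univ.filter fun i => ω i) ∂bernoulliProduct p =
      multilinearExt f (fun i => p i) := by
  rw [integral_fintype .of_finite, multilinearExt]
  refine sum_nbij' (fun ω => univ.filter fun i => ω i) (fun A i => decide (i ∈ A))
    (by simp) (by simp) (fun ω _ => by ext; simp) (fun A _ => by ext; simp) fun ω _ => ?_
  rw [bernoulliProduct_real_singleton, smul_eq_mul]

end BernoulliProduct

/-- `h (X ω)` is a version of `P(A | X)`. -/
theorem exists_comp_eq_condExp_indicator {Ω : Type*} {mΩ : MeasurableSpace Ω} {μ : Measure Ω}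
    [IsProbabilityMeasure μ] {X : Ω → ℝ} (hX : Measurable X) (hXi : Integrable X μ)
    {A : Set Ω} (hA : MeasurableSet A) :
    ∃ h : ℝ → ℝ, Measurable h ∧ (∀ t, h t ∈ Set.Icc 0 1) ∧
      ∫ ω, h (X ω) ∂μ = μ.real A ∧ ∫ ω, A.indicator X ω ∂μ = ∫ ω, X ω * h (X ω) ∂μ := by
  set m : MeasurableSpace Ω := MeasurableSpace.comap X inferInstance
  have hm : m ≤ mΩ := hX.comap_le
  have hAi : Integrable (A.indicator (1 : Ω → ℝ)) μ := (integrable_const 1).indicator hA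
  obtain ⟨h₀, hh₀, hg⟩ := (stronglyMeasurable_condExp (m := m) (μ := μ)
    (f := A.indicator (1 : Ω → ℝ))).exists_eq_measurable_comp
  -- clamped, since `μ[1_A | σ(X)]` lies in `[0, 1]` only almost everywhere
  set h : ℝ → ℝ := fun t => max 0 (min (h₀ t) 1)
  have hgh : μ[A.indicator 1 | m] =ᵐ[μ] fun ω => h (X ω) := by
    have hle : μ[A.indicator 1 | m] ≤ᵐ[μ] μ[fun _ => (1 : ℝ) | m] :=
      condExp_mono hAi (integrable_const 1)
        (.of_forall fun ω => Set.indicator_le_self' (fun _ _ => zero_le_one) ω)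
    rw [condExp_const hm] at hle
    filter_upwards [hle, condExp_nonneg (m := m) (.of_forall fun ω =>
      Set.indicator_nonneg (fun _ _ => zero_le_one) ω : 0 ≤ᵐ[μ] A.indicator (1 : Ω → ℝ))]
      with ω h1 h0
    simp only [hg, Function.comp_apply, Pi.zero_apply] at h1 h0 ⊢
    simp [h, h1, h0]
  have hXA : X * A.indicator 1 = A.indicator X := by
    ext ω; by_cases hω : ω ∈ A <;> simp [hω]
  refine ⟨h, measurable_const.max (hh₀.measurable.min measurable_const), fun t => ?_, ?_, ?_⟩
  · exact ⟨le_max_left _ _, max_le zero_le_one (min_le_right _ _)⟩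
  · rw [← integral_congr_ae hgh, integral_condExp hm, integral_indicator_one hA]
  · have hpull := condExp_mul_of_stronglyMeasurable_left (m := m) (μ := μ)
      (comap_measurable X).stronglyMeasurable (hXA ▸ hXi.indicator hA) hAi
    rw [← hXA, ← integral_condExp hm]
    refine integral_congr_ae ?_
    filter_upwards [hpull, hgh] with ω h1 h2
    simp [h1, h2]

section IndependentCoins

variable {ι Ω : Type*} [Fintype ι] [DecidableEq ι] {mΩ : MeasurableSpace Ω} {μ : Measure Ω}
  [IsProbabilityMeasure μ] {X : ι → Ω → ℝ} {h : ι → ℝ → ℝ} {y : ι → ℝ}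

lemma integral_bernoulliWeight_mul (hX : iIndepFun X μ) (hXm : ∀ i, Measurable (X i))
    (hhm : ∀ i, Measurable (h i)) (hh : ∀ i t, h i t ∈ Set.Icc 0 1)
    (hy : ∀ i, (∫ ω, h i (X i ω) ∂μ) * y i = ∫ ω, X i ω * h i (X i ω) ∂μ)
    {A : Finset ι} {i : ι} (hi : i ∈ A) :
    ∫ ω, bernoulliWeight (fun j => h j (X j ω)) A * X i ω ∂μ
      = bernoulliWeight (fun j => ∫ ω, h j (X j ω) ∂μ) A * y i := by
  -- the factor `X i` is absorbed into the `i`-th coordinate, so that independence applies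
  set φ : ι → ℝ → ℝ := fun j t =>
    (if j = i then t else 1) * if j ∈ A then h j t else 1 - h j t
  have hφ : ∀ ω, bernoulliWeight (fun j => h j (X j ω)) A * X i ω = ∏ j, φ j (X j ω) := by
    intro ω
    simp only [φ, prod_mul_distrib, prod_ite_eq', mem_univ, if_true, bernoulliWeight_eq_prod_ite,
      mul_comm]
  have hφint : ∀ j, ∫ ω, φ j (X j ω) ∂μ = (if j = i then y i else 1) *
      if j ∈ A then ∫ ω, h j (X j ω) ∂μ else 1 - ∫ ω, h j (X j ω) ∂μ := by
    intro j
    by_cases hji : j = i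
    · subst hji
      simp only [φ, if_pos hi, if_true, ← hy, mul_comm]
    · by_cases hjA : j ∈ A
      · simp [φ, hji, hjA]
      · simp [φ, hji, hjA,
          integral_sub (integrable_const 1) (integrable_comp_of_mem_Icc (hXm j) (hhm j) (hh j))]
  simp_rw [hφ]
  rw [hX.integral_fun_prod_comp (fun j => (hXm j).aemeasurable) (fun j => ?_)]
  · simp only [hφint, prod_mul_distrib, prod_ite_eq', mem_univ, if_true,
      bernoulliWeight_eq_prod_ite, mul_comm]
  · have := hhm j
    exact (by dsimp only [φ]; split_ifs <;> fun_prop : Measurable (φ j)).aestronglyMeasurable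

/-- The left side is the value of choosing a best `y`-weighted member of `F` inside the set of
heads of independent coins of biases `h i (X i)`, a choice that is feasible ex post. -/
theorem multilinearExt_weightedRank_le_integral (hX : iIndepFun X μ)
    (hXm : ∀ i, Measurable (X i)) (hXi : ∀ i, Integrable (X i) μ) (hhm : ∀ i, Measurable (h i))
    (hh : ∀ i t, h i t ∈ Set.Icc 0 1)
    (hy : ∀ i, (∫ ω, h i (X i ω) ∂μ) * y i = ∫ ω, X i ω * h i (X i ω) ∂μ)
    (F : Finset (Finset ι)) (hemp : ∅ ∈ F) :
    multilinearExt (weightedRank F hemp y) (fun i => ∫ ω, h i (X i ω) ∂μ)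
      ≤ ∫ ω, F.sup' ⟨∅, hemp⟩ (fun T => ∑ i ∈ T, X i ω) ∂μ := by
  choose T hTmem hT using fun A => exists_mem_eq_sup' (s := F.filter (· ⊆ A))
    ⟨∅, mem_filter.mpr ⟨hemp, empty_subset A⟩⟩ fun S => ∑ i ∈ S, y i
  have hTF A : T A ∈ F := (mem_filter.1 (hTmem A)).1
  have hTA A : T A ⊆ A := (mem_filter.1 (hTmem A)).2
  set W : Finset ι → Ω → ℝ := fun A ω => bernoulliWeight (fun j => h j (X j ω)) A
  have hW : ∀ A {g : Ω → ℝ}, Integrable g μ → Integrable (fun ω => W A ω * g ω) μ :=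
    fun A g hg => hg.bdd_mul (c := 1) (by simp only [W, bernoulliWeight]; fun_prop)
      (.of_forall fun ω => by
        rw [Real.norm_eq_abs, abs_of_nonneg (bernoulliWeight_nonneg (fun j => hh j _) A)]
        exact bernoulliWeight_le_one (fun j => hh j _) A)
  have hWX : ∀ A i, Integrable (fun ω => W A ω * X i ω) μ := fun A i => hW A (hXi i)
  calc multilinearExt (weightedRank F hemp y) (fun i => ∫ ω, h i (X i ω) ∂μ)
      = ∑ A ∈ univ.powerset, ∑ i ∈ T A, ∫ ω, W A ω * X i ω ∂μ := by
        refine sum_congr rfl fun A _ => ?_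
        rw [weightedRank, hT, mul_sum]
        exact sum_congr rfl fun i hi =>
          (integral_bernoulliWeight_mul hX hXm hhm hh hy (hTA A hi)).symm
    _ = ∫ ω, multilinearExt (fun A => ∑ i ∈ T A, X i ω) (fun j => h j (X j ω)) ∂μ := by
        simp only [multilinearExt, mul_sum]
        rw [integral_finsetSum _ fun A _ => integrable_finsetSum _ fun i _ => hWX A i]
        exact sum_congr rfl fun A _ => (integral_finsetSum _ fun i _ => hWX A i).symm
    _ ≤ ∫ ω, F.sup' ⟨∅, hemp⟩ (fun T => ∑ i ∈ T, X i ω) ∂μ := by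
        refine integral_mono
          (integrable_finsetSum _ fun A _ => hW A (integrable_finsetSum _ fun i _ => hXi i))
          (integrable_finsetSup' _ fun S _ => integrable_finsetSum _ fun i _ => hXi i)
          fun ω => multilinearExt_le (fun j => hh j _) fun A =>
            le_sup' (fun S => ∑ i ∈ S, X i ω) (hTF A)

end IndependentCoins

section BernoulliInstance

variable {n : ℕ} (p : Fin n → unitInterval) {y : Fin n → ℝ} (hy : ∀ i, 0 ≤ y i)

noncomputable def bernoulliInstance : BCSInstance n where
  Ω := Fin n → Bool
  μ := bernoulliProduct p
  prob := inferInstance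
  X i ω := if ω i then y i else 0
  Xmeas _ := .of_discrete
  Xnonneg i ω := by split_ifs <;> simp [hy i]
  Xint _ := .of_finite
  Xindep := iIndepFun_pi (μ := fun i => Ber(true, false, p i))
    (X := fun i b => if b then y i else 0) fun _ => Measurable.of_discrete.aemeasurable
  S ω := univ.filter fun i => ω i
  Smeas _ := .of_discrete

lemma bernoulliInstance_marginal (i : Fin n) :
    ((bernoulliInstance p hy).μ {ω | i ∈ (bernoulliInstance p hy).S ω}).toReal = p i := by
  simp only [bernoulliInstance, mem_filter, mem_univ, true_and]
  exact bernoulliProduct_real_coord_eq_true p i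

lemma integral_bernoulliInstance_selected :
    ∫ ω, ∑ i ∈ (bernoulliInstance p hy).S ω, (bernoulliInstance p hy).X i ω
      ∂(bernoulliInstance p hy).μ = ∑ i, p i * y i := by
  have hsum (ω : Fin n → Bool) :
      ∑ i ∈ (bernoulliInstance p hy).S ω, (bernoulliInstance p hy).X i ω =
        ∑ i, {ω : Fin n → Bool | ω i = true}.indicator (fun _ => y i) ω := by
    simp only [bernoulliInstance, Set.indicator_apply, Set.mem_ofPred_eq, sum_filter]
    exact sum_congr rfl fun i _ => by split_ifs <;> rfl
  refine (integral_congr_ae (μ := bernoulliProduct p) (.of_forall hsum)).trans ?_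
  rw [integral_finsetSum _ fun i _ => .of_finite]
  refine sum_congr rfl fun i _ => ?_
  rw [integral_indicator_const _ .of_discrete, bernoulliProduct_real_coord_eq_true, smul_eq_mul]

lemma integral_bernoulliInstance_sup' {F : Finset (Finset (Fin n))}
    (hdc : ∀ S ∈ F, ∀ T ⊆ S, T ∈ F) (hemp : ∅ ∈ F) :
    ∫ ω, F.sup' ⟨∅, hemp⟩ (fun T => ∑ i ∈ T, (bernoulliInstance p hy).X i ω)
      ∂(bernoulliInstance p hy).μ = multilinearExt (weightedRank F hemp y) (fun i => p i) := by
  rw [← integral_bernoulliProduct_comp]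
  refine integral_congr_ae (.of_forall fun ω => ?_)
  refine Eq.trans ?_ (sup'_sum_ite_mem_eq_weightedRank hdc hemp y _)
  simp [bernoulliInstance]

end BernoulliInstance

theorem BCSInstance.exists_integral_selected_eq_and_multilinearExt_le {n : ℕ}
    (I : BCSInstance n) (F : Finset (Finset (Fin n))) (hemp : ∅ ∈ F) :
    ∃ y : Fin n → ℝ, (∀ i, 0 ≤ y i) ∧
      ∫ ω, ∑ i ∈ I.S ω, I.X i ω ∂I.μ = ∑ i, I.μ.real {ω | i ∈ I.S ω} * y i ∧
      multilinearExt (weightedRank F hemp y) (fun i => I.μ.real {ω | i ∈ I.S ω})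
        ≤ ∫ ω, F.sup' ⟨∅, hemp⟩ (fun T => ∑ i ∈ T, I.X i ω) ∂I.μ := by
  have := I.prob
  choose h hhm hh hhq hsel using fun i =>
    exists_comp_eq_condExp_indicator (I.Xmeas i) (I.Xint i) (I.Smeas i)
  set q : Fin n → ℝ := fun i => I.μ.real {ω | i ∈ I.S ω}
  -- where `q i = 0`, this is `0` by `x / 0 = 0`, and so is `E[X i; i ∈ S]`
  set y : Fin n → ℝ := fun i => (∫ ω, I.X i ω * h i (I.X i ω) ∂I.μ) / q i
  have hqy : ∀ i, q i * y i = ∫ ω, I.X i ω * h i (I.X i ω) ∂I.μ := by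
    intro i
    rcases eq_or_ne (q i) 0 with hq | hq
    · rw [hq, zero_mul, ← hsel i, integral_indicator (I.Smeas i),
        setIntegral_measure_zero _ ((measureReal_eq_zero_iff).1 hq)]
    · exact mul_div_cancel₀ _ hq
  refine ⟨y, fun i => div_nonneg (integral_nonneg fun ω =>
    mul_nonneg (I.Xnonneg i ω) (hh i _).1) measureReal_nonneg, ?_, ?_⟩
  · have hsum ω : ∑ i ∈ I.S ω, I.X i ω = ∑ i, {ω | i ∈ I.S ω}.indicator (I.X i) ω := by
      simp [Set.indicator_apply, sum_ite_mem]
    rw [integral_congr_ae (.of_forall hsum),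
      integral_finsetSum _ fun i _ => (I.Xint i).indicator (I.Smeas i)]
    exact sum_congr rfl fun i _ => (hsel i).trans (hqy i).symm
  · have hq : (fun i => ∫ ω, h i (I.X i ω) ∂I.μ) = q := funext hhq
    have := multilinearExt_weightedRank_le_integral I.Xindep I.Xmeas I.Xint hhm hh
      (y := y) (fun i => by rw [hhq]; exact hqy i) F hemp
    rwa [hq] at this

/-- The worst-case ratio between the ex ante and ex post optima of Bayesian
combinatorial selection over `F` equals the correlation gap of `F`. -/
theorem stmt6 (n : ℕ) (F : Finset (Finset (Fin n)))
    (hdc : ∀ S ∈ F, ∀ T ⊆ S, T ∈ F) (hemp : ∅ ∈ F) :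
    (⨆ (x : Fin n → ℝ) (_ : x ∈ exAntePolytope n F)
        (y : Fin n → ℝ) (_ : ∀ i, 0 ≤ y i),
      ENNReal.ofReal (∑ i : Fin n, x i * y i) /
        ENNReal.ofReal (∑ A ∈ (Finset.univ : Finset (Fin n)).powerset,
          ((∏ i ∈ A, x i) * ∏ i ∈ Aᶜ, (1 - x i)) *
            (F.filter (fun S => S ⊆ A)).sup'
              ⟨∅, Finset.mem_filter.mpr ⟨hemp, Finset.empty_subset _⟩⟩
              (fun S => ∑ i ∈ S, y i)))
    = ⨆ (I : BCSInstance n)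
        (_ : (fun i => (I.μ {ω | i ∈ I.S ω}).toReal) ∈ exAntePolytope n F),
        ENNReal.ofReal (∫ ω, ∑ i ∈ I.S ω, I.X i ω ∂I.μ) /
          ENNReal.ofReal (∫ ω, F.sup' ⟨∅, hemp⟩ (fun T => ∑ i ∈ T, I.X i ω) ∂I.μ) := by
  refine le_antisymm (iSup₂_le fun x hx => iSup₂_le fun y hy => ?_) (iSup₂_le fun I hI => ?_)
  · set p : Fin n → unitInterval := fun i => ⟨x i, mem_Icc_of_mem_exAntePolytope hx i⟩
    refine le_iSup₂_of_le (bernoulliInstance p hy)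
      ((funext (bernoulliInstance_marginal p hy)).symm ▸ hx) ?_
    rw [integral_bernoulliInstance_selected, integral_bernoulliInstance_sup' p hy hdc hemp]
    exact le_rfl
  · obtain ⟨y, hy, hsel, hmax⟩ := I.exists_integral_selected_eq_and_multilinearExt_le F hemp
    refine le_iSup₂_of_le _ hI (le_iSup₂_of_le y hy ?_)
    rw [hsel]
    exact ENNReal.div_le_div_left (ENNReal.ofReal_le_ofReal hmax) _
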